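/- Let h : ℝ^d∖{0} → (0,1) be even, homogeneous of degree 0 and C¹ on the sphere S^{d−1}, and let f_h(ξ) = |ξ|^{−2h(ξ)−d}. Let ρ be a Schwartz function on ℝ^{d−1} with Fourier transform ρ̂ normalized so that ∫_{ℝ^{d−1}} |ρ̂(γ)|² dγ = 1, and set R(p) = ∫_{ℝ^{d−1}} f_h(γ, p) |ρ̂(γ)|² dγ. Then for every δ ∈ (0,1), (R(p) − |p|^{−2h(θ0)−d}) · |p|^{2h(θ0)+d+δ} → 0 as |p| → ∞. -/

import Mathlib

open MeasureTheory Filter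

noncomputable section

/-- The point `(γ, p) ∈ ℝ^{m+1}` with `γ ∈ ℝ^m` and last coordinate `p`. -/
def app {m : ℕ} (γ : EuclideanSpace ℝ (Fin m)) (p : ℝ) :
    EuclideanSpace ℝ (Fin (m + 1)) :=
  WithLp.toLp 2 (Fin.snoc (α := fun _ => ℝ) (WithLp.ofLp γ) p)

/-- The direction `θ₀ = (0, …, 0, 1) ∈ ℝ^{m+1}`. -/
def theta0 (m : ℕ) : EuclideanSpace ℝ (Fin (m + 1)) := app 0 1

/-- `g` is homogeneous of degree `0` on `ℝ^n ∖ {0}`. -/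
def Homog0 {n : ℕ} (g : EuclideanSpace ℝ (Fin n) → ℝ) : Prop :=
  ∀ t : ℝ, 0 < t → ∀ ξ : EuclideanSpace ℝ (Fin n), ξ ≠ 0 → g (t • ξ) = g ξ

/-- `g` is even. -/
def EvenFn {n : ℕ} (g : EuclideanSpace ℝ (Fin n) → ℝ) : Prop :=
  ∀ ξ : EuclideanSpace ℝ (Fin n), g (-ξ) = g ξ

/-- `g` is Lipschitz of order `α` on the unit sphere. -/
def LipSphere {n : ℕ} (g : EuclideanSpace ℝ (Fin n) → ℝ) (α : ℝ) : Prop :=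
  ∃ L > (0 : ℝ), ∀ x y : EuclideanSpace ℝ (Fin n), ‖x‖ = 1 → ‖y‖ = 1 →
    |g x - g y| ≤ L * ‖x - y‖ ^ α

/-- `ρ` is rapidly decreasing. -/
def RapidDecay {n : ℕ} (ρ : EuclideanSpace ℝ (Fin n) → ℝ) : Prop :=
  ∀ k : ℕ, ∃ C > (0 : ℝ), ∀ x : EuclideanSpace ℝ (Fin n),
    |ρ x| ≤ C * (1 + ‖x‖) ^ (-(k : ℝ))

/-- The Fourier transform of the window `ρ` on `ℝ^m`. -/
def ftRho {m : ℕ} (ρ : SchwartzMap (EuclideanSpace ℝ (Fin m)) ℝ) :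
    EuclideanSpace ℝ (Fin m) → ℂ :=
  FourierTransform.fourier (fun x => (ρ x : ℂ))

/-- The spectral density `f_h(ξ) = |ξ|^{-2h(ξ)-d}` of an anisotropic fractional
Brownian field in dimension `d = m+1`. -/
def fh {m : ℕ} (h : EuclideanSpace ℝ (Fin (m + 1)) → ℝ)
    (ξ : EuclideanSpace ℝ (Fin (m + 1))) : ℝ :=
  ‖ξ‖ ^ (-2 * h ξ - (m + 1 : ℝ))

/-- The spectral density of the Radon transform: `R(p) = ∫ f_h(γ,p) |ρ̂(γ)|² dγ`. -/
def radonDensity {m : ℕ} (h : EuclideanSpace ℝ (Fin (m + 1)) → ℝ)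
    (ρ : SchwartzMap (EuclideanSpace ℝ (Fin m)) ℝ) (p : ℝ) : ℝ :=
  ∫ γ : EuclideanSpace ℝ (Fin m), fh h (app γ p) * ‖ftRho ρ γ‖ ^ 2

/-!
Write `H = h(θ₀)`, `q = |p|`, `g = ‖γ‖` and `n = ‖(γ, p)‖ = √(g² + q²)`. Homogeneity and evenness
give `h(γ, p) = h(γ / p, 1)`, and `h` is Lipschitz near `θ₀`, so `|h(γ, p) - H| ≤ K g / q`. While
`g log q ≲ q` this makes `q ^ (2 (H - h(γ, p))) = 1 + O(g log q / q)`, and `(n / q) ^ (-2h - d)` is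
`1 + O(g² / q²)`; in the remaining range `g ≳ q / log q` the trivial bound `q ^ (2 + δ)` is
absorbed by `(K g log q / q)³`. So the integrand of `(R(p) - q ^ (-2H-d)) q ^ (2H+d+δ)` is at most
`C (1 + g³) |ρ̂(γ)|² (log q)³ q ^ (δ - 1)`, and `(1 + g³) |ρ̂|²` is integrable because `ρ̂` is a
Schwartz function.
-/

open scoped NNReal

lemma ContDiffAt.exists_norm_sub_le_mul_norm_sub {E F : Type*} [NormedAddCommGroup E]
    [NormedSpace ℝ E] [NormedAddCommGroup F] [NormedSpace ℝ F] {f : E → F} {x₀ : E}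
    (hf : ContDiffAt ℝ 1 f x₀) {B : ℝ} (hB : ∀ x, ‖f x - f x₀‖ ≤ B) :
    ∃ K : ℝ≥0, ∀ x, ‖f x - f x₀‖ ≤ K * ‖x - x₀‖ := by
  obtain ⟨K, t, ht, hlip⟩ := hf.exists_lipschitzOnWith
  obtain ⟨r, hr, hball⟩ := Metric.mem_nhds_iff.1 ht
  have hB0 : 0 ≤ B := by simpa using hB x₀
  refine ⟨max K ⟨B / r, by positivity⟩, fun x => ?_⟩
  rcases lt_or_ge ‖x - x₀‖ r with hx | hx
  · calc ‖f x - f x₀‖ ≤ K * ‖x - x₀‖ := by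
          simpa [dist_eq_norm] using
            hlip.dist_le_mul x (hball (by simpa [dist_eq_norm] using hx)) x₀
              (hball (Metric.mem_ball_self hr))
      _ ≤ _ := by gcongr; exact_mod_cast le_max_left _ _
  · calc ‖f x - f x₀‖ ≤ B / r * r := by rw [div_mul_cancel₀ _ hr.ne']; exact hB x
      _ ≤ _ := by
          gcongr
          exact (NNReal.coe_le_coe.2 (le_max_right K ⟨B / r, by positivity⟩) :)

lemma one_sub_rpow_neg_le {t b : ℝ} (ht : 1 ≤ t) (hb : 0 ≤ b) :
    1 - t ^ (-b) ≤ b * (t - 1) := by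
  have ht0 : 0 < t := by linarith
  have hexp : t ^ (-b) = Real.exp (-(b * Real.log t)) := by
    rw [Real.rpow_def_of_pos ht0]; ring_nf
  have hlog := mul_le_mul_of_nonneg_left (Real.log_le_sub_one_of_pos ht0) hb
  linarith [Real.add_one_le_exp (-(b * Real.log t))]

lemma tendsto_log_pow_mul_rpow_atTop (k : ℕ) {s : ℝ} (hs : s < 0) :
    Tendsto (fun q : ℝ => Real.log q ^ k * q ^ s) atTop (nhds 0) := by
  refine (isLittleO_log_rpow_rpow_atTop (k : ℝ) (neg_pos.2 hs)).tendsto_div_nhds_zero.congr'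
    ((eventually_gt_atTop 0).mono fun q hq => ?_)
  rw [Real.rpow_natCast, div_eq_mul_inv, ← Real.rpow_neg hq.le, neg_neg]

lemma SchwartzMap.integrable_pow_mul_norm_sq {E F : Type*} [NormedAddCommGroup E]
    [NormedSpace ℝ E] [MeasurableSpace E] [BorelSpace E] [SecondCountableTopology E]
    [NormedAddCommGroup F] [NormedSpace ℝ F] {μ : Measure E} [μ.HasTemperateGrowth]
    (S : SchwartzMap E F) (k : ℕ) :
    Integrable (fun x => ‖x‖ ^ k * ‖S x‖ ^ 2) μ := by
  simp_rw [sq, ← mul_assoc]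
  exact (S.integrable_pow_mul μ k).mul_bdd S.continuous.norm.aestronglyMeasurable
    (Eventually.of_forall fun x => by simpa using S.norm_le_seminorm ℝ x)

lemma Homog0.apply_smul_of_even {n : ℕ} {g : EuclideanSpace ℝ (Fin n) → ℝ} (hhom : Homog0 g)
    (heven : EvenFn g) {c : ℝ} (hc : c ≠ 0) {ξ : EuclideanSpace ℝ (Fin n)} (hξ : ξ ≠ 0) :
    g (c • ξ) = g ξ := by
  rcases hc.lt_or_gt with hc | hc
  · rw [← neg_neg c, neg_smul, ← smul_neg, hhom _ (neg_pos.2 hc) _ (neg_ne_zero.2 hξ), heven]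
  · exact hhom c hc ξ hξ

section App

variable {m : ℕ}

lemma norm_app_sq (γ : EuclideanSpace ℝ (Fin m)) (p : ℝ) :
    ‖app γ p‖ ^ 2 = ‖γ‖ ^ 2 + p ^ 2 := by
  simp [EuclideanSpace.norm_sq_eq, Fin.sum_univ_castSucc, app]

lemma abs_le_norm_app (γ : EuclideanSpace ℝ (Fin m)) (p : ℝ) : |p| ≤ ‖app γ p‖ :=
  (sq_le_sq₀ (abs_nonneg p) (norm_nonneg _)).1 <| by
    rw [sq_abs, norm_app_sq]; exact le_add_of_nonneg_left (sq_nonneg _)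

lemma smul_app (c : ℝ) (γ : EuclideanSpace ℝ (Fin m)) (p : ℝ) :
    c • app γ p = app (c • γ) (c * p) := by
  ext i
  induction i using Fin.lastCases <;> simp [app]

lemma app_ne_zero (γ : EuclideanSpace ℝ (Fin m)) {p : ℝ} (hp : p ≠ 0) : app γ p ≠ 0 :=
  fun h0 => hp (by simpa [app] using congrArg (· (Fin.last m)) h0)

lemma contDiff_app (p : ℝ) : ContDiff ℝ ⊤ fun γ : EuclideanSpace ℝ (Fin m) => app γ p := by
  refine contDiff_piLp' (p := 2) fun i => ?_
  induction i using Fin.lastCases with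
  | last => simpa [app] using contDiff_const
  | cast i => simpa [app] using (EuclideanSpace.proj (𝕜 := ℝ) i).contDiff

lemma Homog0.exists_abs_app_sub_theta0_le {h : EuclideanSpace ℝ (Fin (m + 1)) → ℝ}
    (hhhom : Homog0 h) (hheven : EvenFn h)
    (hhC1 : ContDiffOn ℝ 1 h {(0 : EuclideanSpace ℝ (Fin (m + 1)))}ᶜ)
    (hhran : ∀ ξ, ξ ≠ 0 → h ξ ∈ Set.Icc (0 : ℝ) 1) :
    ∃ K : ℝ≥0, ∀ (γ : EuclideanSpace ℝ (Fin m)) (p : ℝ), p ≠ 0 →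
      |h (app γ p) - h (theta0 m)| ≤ K * (‖γ‖ / |p|) := by
  have hθ : theta0 m ≠ 0 := app_ne_zero 0 one_ne_zero
  have hC : ContDiffAt ℝ 1 (fun u => h (app u 1)) (0 : EuclideanSpace ℝ (Fin m)) :=
    (hhC1.contDiffAt (isOpen_compl_singleton.mem_nhds hθ)).comp (0 : EuclideanSpace ℝ (Fin m))
      ((contDiff_app 1).contDiffAt.of_le le_top)
  obtain ⟨K, hK⟩ := hC.exists_norm_sub_le_mul_norm_sub (B := 1) fun u => by
    have h1 := hhran _ (app_ne_zero u one_ne_zero)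
    have h2 : h (app 0 1) ∈ Set.Icc 0 1 := hhran _ hθ
    rw [Real.norm_eq_abs, abs_le]
    exact ⟨by linarith [h1.1, h2.2], by linarith [h1.2, h2.1]⟩
  refine ⟨K, fun γ p hp => ?_⟩
  have hscale : app γ p = p • app (p⁻¹ • γ) 1 := by
    rw [smul_app, smul_smul, mul_one, mul_inv_cancel₀ hp, one_smul]
  rw [hscale, hhhom.apply_smul_of_even hheven hp (app_ne_zero _ one_ne_zero)]
  simpa [theta0, norm_smul, div_eq_inv_mul] using hK (p⁻¹ • γ)

end App

section RpowError

variable {d x H δ K q g n : ℝ}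

lemma abs_rpow_sub_rpow_mul_rpow_le_of_mul_log_le_one (hd : 0 ≤ d) (hx : x ∈ Set.Icc (0 : ℝ) 1)
    (hq : 1 ≤ q) (hn0 : 0 ≤ n) (hn : n ^ 2 = g ^ 2 + q ^ 2) (hxH : |x - H| ≤ K * (g / q))
    (hsmall : 2 * K * (g / q) * Real.log q ≤ 1) :
    |n ^ (-2 * x - d) - q ^ (-2 * H - d)| * q ^ (2 * H + d + δ)
      ≤ q ^ δ * (4 * K * (g / q) * Real.log q + (d + 2) * (g / q) ^ 2) := by
  have hq0 : 0 < q := by linarith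
  set s := g / q
  set t := n / q
  have hts : t ^ 2 = 1 + s ^ 2 := by
    simp only [t, s, div_pow, hn]; field_simp; ring
  have ht1 : 1 ≤ t := by nlinarith [div_nonneg hn0 hq0.le]
  set c := t ^ (-2 * x - d)
  have hc0 : 0 ≤ c := Real.rpow_nonneg (by linarith) _
  have hc1 : c ≤ 1 := Real.rpow_le_one_of_one_le_of_nonpos ht1 (by linarith [hx.1])
  have h1c : 1 - c ≤ (d + 2) * s ^ 2 := by
    have := one_sub_rpow_neg_le ht1 (by linarith [hx.1] : 0 ≤ 2 * x + d)
    rw [neg_add', ← neg_mul] at this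
    nlinarith [hx.2]
  set a := Real.log q * (2 * (H - x))
  have ha : |a| ≤ 2 * K * s * Real.log q := by
    rw [abs_mul, abs_of_nonneg (Real.log_nonneg hq), abs_mul, abs_two, abs_sub_comm]
    nlinarith [Real.log_nonneg hq]
  have hfactor : n ^ (-2 * x - d) * q ^ (2 * H + d + δ) = q ^ δ * (Real.exp a * c) := by
    rw [show n = q * t from (mul_div_cancel₀ n hq0.ne').symm, Real.mul_rpow hq0.le (by linarith),
      mul_comm (q ^ _) c, mul_assoc, ← Real.rpow_add hq0,
      show -2 * x - d + (2 * H + d + δ) = δ + 2 * (H - x) by ring, Real.rpow_add hq0,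
      Real.rpow_def_of_pos hq0 (2 * (H - x))]
    ring
  have hcancel : q ^ (-2 * H - d) * q ^ (2 * H + d + δ) = q ^ δ := by
    rw [← Real.rpow_add hq0]; ring_nf
  have hmain : |Real.exp a * c - 1| ≤ 2 * |a| + (1 - c) := by
    calc |Real.exp a * c - 1| = |(Real.exp a - 1) * c - (1 - c)| := by ring_nf
      _ ≤ |Real.exp a - 1| * c + (1 - c) := by
          refine (abs_sub _ _).trans ?_
          rw [abs_mul (Real.exp a - 1) c, abs_of_nonneg hc0, abs_of_nonneg (sub_nonneg.2 hc1)]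
      _ ≤ 2 * |a| * 1 + (1 - c) := by
          gcongr
          exact Real.abs_exp_sub_one_le (ha.trans hsmall)
      _ = _ := by ring
  rw [← abs_of_nonneg (Real.rpow_nonneg hq0.le (2 * H + d + δ)), ← abs_mul, sub_mul,
    hfactor, hcancel, ← mul_sub_one, abs_mul, abs_of_nonneg (Real.rpow_nonneg hq0.le δ)]
  gcongr
  linarith

lemma abs_rpow_sub_rpow_mul_rpow_le_rpow (hd : 0 ≤ d) (hx : x ∈ Set.Icc (0 : ℝ) 1)
    (hH : H ∈ Set.Icc (0 : ℝ) 1) (hq : 1 ≤ q) (hnq : q ≤ n) :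
    |n ^ (-2 * x - d) - q ^ (-2 * H - d)| * q ^ (2 * H + d + δ) ≤ q ^ (2 + δ) := by
  have hq0 : 0 < q := by linarith
  have hbound : |n ^ (-2 * x - d) - q ^ (-2 * H - d)| ≤ q ^ (-d) := by
    refine abs_sub_le_of_nonneg_of_le (Real.rpow_nonneg (by linarith) _) ?_
      (Real.rpow_nonneg hq0.le _) (Real.rpow_le_rpow_of_exponent_le hq (by linarith [hH.1]))
    calc n ^ (-2 * x - d) ≤ n ^ (-d) :=
          Real.rpow_le_rpow_of_exponent_le (hq.trans hnq) (by linarith [hx.1])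
      _ ≤ q ^ (-d) := by
          rw [Real.rpow_neg (by linarith), Real.rpow_neg hq0.le]
          gcongr
  calc |n ^ (-2 * x - d) - q ^ (-2 * H - d)| * q ^ (2 * H + d + δ)
      ≤ q ^ (-d) * q ^ (2 * H + d + δ) := by gcongr
    _ = q ^ (2 * H + δ) := by rw [← Real.rpow_add hq0]; ring_nf
    _ ≤ q ^ (2 + δ) := Real.rpow_le_rpow_of_exponent_le hq (by linarith [hH.2])

lemma abs_rpow_sub_rpow_mul_rpow_le (hd : 0 ≤ d) (hx : x ∈ Set.Icc (0 : ℝ) 1)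
    (hH : H ∈ Set.Icc (0 : ℝ) 1) (hK : 0 ≤ K) (hq : Real.exp 1 ≤ q) (hg : 0 ≤ g)
    (hn0 : 0 ≤ n) (hn : n ^ 2 = g ^ 2 + q ^ 2) (hxH : |x - H| ≤ K * (g / q)) :
    |n ^ (-2 * x - d) - q ^ (-2 * H - d)| * q ^ (2 * H + d + δ)
      ≤ (4 * K + d + 2 + 8 * K ^ 3) * (1 + g ^ 3) * (Real.log q ^ 3 * q ^ (δ - 1)) := by
  have hq1 : 1 ≤ q := (Real.one_le_exp zero_le_one).trans hq
  have hq0 : 0 < q := by linarith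
  set L := Real.log q
  have hL : 1 ≤ L := (Real.le_log_iff_exp_le hq0).2 hq
  set P := q ^ (δ - 1) with hPdef
  have hP : 0 ≤ P := Real.rpow_nonneg hq0.le _
  set B := (1 + g ^ 3) * (L ^ 3 * P)
  have hB : 0 ≤ B := by positivity
  rw [mul_assoc]
  rcases le_or_gt (2 * K * (g / q) * L) 1 with hsmall | hlarge
  · have hgL : g * L ≤ (1 + g ^ 3) * L ^ 3 :=
      mul_le_mul (by nlinarith [sq_nonneg (g - 1)]) (le_self_pow₀ hL (by norm_num)) (by linarith)
        (by positivity)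
    have hg2 : g ^ 2 / q ≤ (1 + g ^ 3) * L ^ 3 :=
      calc g ^ 2 / q ≤ g ^ 2 := div_le_self (sq_nonneg g) hq1
        _ ≤ 1 + g ^ 3 := by nlinarith [sq_nonneg (g - 1)]
        _ ≤ (1 + g ^ 3) * L ^ 3 := le_mul_of_one_le_right (by positivity) (one_le_pow₀ hL)
    calc _ ≤ q ^ δ * (4 * K * (g / q) * L + (d + 2) * (g / q) ^ 2) :=
          abs_rpow_sub_rpow_mul_rpow_le_of_mul_log_le_one hd hx hq1 hn0 hn hxH hsmall
      _ = P * (4 * K * (g * L) + (d + 2) * (g ^ 2 / q)) := by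
          rw [show δ = 1 + (δ - 1) by ring, Real.rpow_add hq0, Real.rpow_one]
          field_simp
          rw [hPdef]; ring
      _ ≤ P * (4 * K * ((1 + g ^ 3) * L ^ 3) + (d + 2) * ((1 + g ^ 3) * L ^ 3)) := by
          gcongr
      _ = (4 * K + d + 2) * B := by ring
      _ ≤ _ := mul_le_mul_of_nonneg_right (by nlinarith [pow_nonneg hK 3]) hB
  · have hnq : q ≤ n := by nlinarith [sq_nonneg g]
    calc _ ≤ q ^ (2 + δ) := abs_rpow_sub_rpow_mul_rpow_le_rpow hd hx hH hq1 hnq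
      _ = q ^ 3 * P * 1 := by
          rw [mul_one, show (2 : ℝ) + δ = (3 : ℕ) + (δ - 1) by push_cast; ring,
            Real.rpow_add hq0, Real.rpow_natCast]
      _ ≤ q ^ 3 * P * (2 * K * (g / q) * L) ^ 3 := by
          gcongr; exact one_le_pow₀ hlarge.le
      _ = 8 * K ^ 3 * (g ^ 3 * (L ^ 3 * P)) := by field_simp; ring
      _ ≤ 8 * K ^ 3 * B := by
          gcongr ?_ * ?_
          exact mul_le_mul_of_nonneg_right (by linarith) (by positivity)
      _ ≤ _ := mul_le_mul_of_nonneg_right (by linarith) hB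

end RpowError

lemma ftRho_eq_fourier {m : ℕ} (ρ : SchwartzMap (EuclideanSpace ℝ (Fin m)) ℝ) :
    ftRho ρ = ⇑(FourierTransform.fourier (SchwartzMap.postcompCLM Complex.ofRealCLM ρ)) := by
  rw [SchwartzMap.fourier_coe]; rfl

section RadonDensity

variable {m : ℕ} {h : EuclideanSpace ℝ (Fin (m + 1)) → ℝ}

lemma continuous_fh_app (hhC1 : ContDiffOn ℝ 1 h {(0 : EuclideanSpace ℝ (Fin (m + 1)))}ᶜ)
    {p : ℝ} (hp : p ≠ 0) :
    Continuous fun γ : EuclideanSpace ℝ (Fin m) => fh h (app γ p) :=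
  have happ := (contDiff_app (m := m) p).continuous
  continuous_norm.comp happ |>.rpow
    (continuous_const.mul (hhC1.continuousOn.comp_continuous happ
      fun γ => app_ne_zero γ hp) |>.sub continuous_const)
    fun γ => Or.inl (norm_ne_zero_iff.2 (app_ne_zero γ hp))

lemma integrable_fh_app_mul (hhC1 : ContDiffOn ℝ 1 h {(0 : EuclideanSpace ℝ (Fin (m + 1)))}ᶜ)
    (hhran : ∀ ξ, ξ ≠ 0 → h ξ ∈ Set.Icc (0 : ℝ) 1) {p : ℝ} (hp : 1 ≤ |p|)
    (S : SchwartzMap (EuclideanSpace ℝ (Fin m)) ℂ) :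
    Integrable fun γ : EuclideanSpace ℝ (Fin m) => fh h (app γ p) * ‖S γ‖ ^ 2 := by
  have hp0 : p ≠ 0 := abs_pos.1 (by linarith)
  refine (by simpa using S.integrable_pow_mul_norm_sq (μ := volume) 0 :
    Integrable fun γ => ‖S γ‖ ^ 2).bdd_mul (c := 1)
    (continuous_fh_app hhC1 hp0).aestronglyMeasurable (Eventually.of_forall fun γ => ?_)
  rw [fh, Real.norm_of_nonneg (Real.rpow_nonneg (norm_nonneg _) _)]
  exact Real.rpow_le_one_of_one_le_of_nonpos (hp.trans (abs_le_norm_app γ p))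
    (by linarith [(hhran _ (app_ne_zero γ hp0)).1])

lemma exists_norm_radonDensity_sub_mul_le (hheven : EvenFn h) (hhhom : Homog0 h)
    (hhC1 : ContDiffOn ℝ 1 h {(0 : EuclideanSpace ℝ (Fin (m + 1)))}ᶜ)
    (hhran : ∀ ξ, ξ ≠ 0 → h ξ ∈ Set.Icc (0 : ℝ) 1)
    (ρ : SchwartzMap (EuclideanSpace ℝ (Fin m)) ℝ)
    (hρnorm : ∫ γ : EuclideanSpace ℝ (Fin m), ‖ftRho ρ γ‖ ^ 2 = 1) (δ : ℝ) :
    ∃ C, ∀ p : ℝ, Real.exp 1 ≤ |p| →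
      ‖(radonDensity h ρ p - |p| ^ (-2 * h (theta0 m) - (m + 1 : ℝ))) *
          |p| ^ (2 * h (theta0 m) + (m + 1 : ℝ) + δ)‖
        ≤ C * (Real.log |p| ^ 3 * |p| ^ (δ - 1)) := by
  obtain ⟨K, hK⟩ := hhhom.exists_abs_app_sub_theta0_le hheven hhC1 hhran
  set S := FourierTransform.fourier (SchwartzMap.postcompCLM Complex.ofRealCLM ρ)
  rw [ftRho_eq_fourier] at hρnorm
  have hw : Integrable fun γ : EuclideanSpace ℝ (Fin m) => ‖S γ‖ ^ 2 := by
    simpa using S.integrable_pow_mul_norm_sq (μ := volume) 0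
  have hweight : Integrable fun γ : EuclideanSpace ℝ (Fin m) => (1 + ‖γ‖ ^ 3) * ‖S γ‖ ^ 2 :=
    (hw.add (S.integrable_pow_mul_norm_sq 3)).congr
      (Eventually.of_forall fun γ => by simp only [Pi.add_apply]; ring)
  set C₀ : ℝ := 4 * K + (m + 1) + 2 + 8 * K ^ 3
  refine ⟨C₀ * ∫ γ, (1 + ‖γ‖ ^ 3) * ‖S γ‖ ^ 2, fun p hp => ?_⟩
  have hp1 : 1 ≤ |p| := (Real.one_le_exp zero_le_one).trans hp
  have hp0 : p ≠ 0 := abs_pos.1 (by linarith)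
  set H := h (theta0 m)
  have hdiff : radonDensity h ρ p - |p| ^ (-2 * H - (m + 1 : ℝ))
      = ∫ γ, (fh h (app γ p) - |p| ^ (-2 * H - (m + 1 : ℝ))) * ‖S γ‖ ^ 2 := by
    simp_rw [sub_mul]
    rw [integral_sub (integrable_fh_app_mul hhC1 hhran hp1 S) (hw.const_mul _),
      integral_const_mul, hρnorm, mul_one, radonDensity, ftRho_eq_fourier]
  rw [hdiff, ← integral_mul_const]
  refine (norm_integral_le_of_norm_le
    (hweight.const_mul (C₀ * (Real.log |p| ^ 3 * |p| ^ (δ - 1))))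
    (Eventually.of_forall fun γ => ?_)).trans_eq (by rw [integral_const_mul]; ring)
  have hpt := abs_rpow_sub_rpow_mul_rpow_le (δ := δ) (n := ‖app γ p‖)
    (by positivity : (0 : ℝ) ≤ m + 1)
    (hhran _ (app_ne_zero γ hp0)) (hhran _ (app_ne_zero 0 one_ne_zero)) K.2 hp (norm_nonneg γ)
    (norm_nonneg _) (by rw [norm_app_sq, sq_abs]) (hK γ p hp0)
  rw [Real.norm_eq_abs, abs_mul, abs_mul, abs_of_nonneg (sq_nonneg ‖S γ‖),
    abs_of_nonneg (Real.rpow_nonneg (abs_nonneg p) _)]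
  calc _ = |fh h (app γ p) - |p| ^ (-2 * H - (m + 1 : ℝ))|
        * |p| ^ (2 * H + (m + 1 : ℝ) + δ) * ‖S γ‖ ^ 2 := by ring
    _ ≤ C₀ * (1 + ‖γ‖ ^ 3) * (Real.log |p| ^ 3 * |p| ^ (δ - 1)) * ‖S γ‖ ^ 2 :=
        mul_le_mul_of_nonneg_right hpt (sq_nonneg _)
    _ = _ := by ring

end RadonDensity

theorem statement17_general (m : ℕ)
    (h : EuclideanSpace ℝ (Fin (m + 1)) → ℝ)
    (hheven : EvenFn h) (hhhom : Homog0 h)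
    (hhC1 : ContDiffOn ℝ 1 h {(0 : EuclideanSpace ℝ (Fin (m + 1)))}ᶜ)
    (hhran : ∀ ξ : EuclideanSpace ℝ (Fin (m + 1)), ξ ≠ 0 → h ξ ∈ Set.Ioo (0 : ℝ) 1)
    (ρ : SchwartzMap (EuclideanSpace ℝ (Fin m)) ℝ)
    (hρnorm : ∫ γ : EuclideanSpace ℝ (Fin m), ‖ftRho ρ γ‖ ^ 2 = 1) :
    ∀ δ ∈ Set.Ioo (0 : ℝ) 1,
      Tendsto (fun p : ℝ =>
          (radonDensity h ρ p - |p| ^ (-2 * h (theta0 m) - (m + 1 : ℝ))) *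
            |p| ^ (2 * h (theta0 m) + (m + 1 : ℝ) + δ))
        (cocompact ℝ) (nhds 0) := by
  intro δ hδ
  obtain ⟨C, hC⟩ := exists_norm_radonDensity_sub_mul_le hheven hhhom hhC1
    (fun ξ hξ => Set.Ioo_subset_Icc_self (hhran ξ hξ)) ρ hρnorm δ
  have habs : Tendsto (fun p : ℝ => |p|) (cocompact ℝ) atTop := tendsto_norm_cocompact_atTop
  have hbound := ((tendsto_log_pow_mul_rpow_atTop 3 (sub_neg.2 hδ.2)).comp habs).const_mul C
  rw [mul_zero] at hbound
  exact squeeze_zero_norm' ((habs.eventually (eventually_ge_atTop _)).mono hC) hbound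

theorem statement17 (m : ℕ) (hm : 1 ≤ m)
    (h : EuclideanSpace ℝ (Fin (m + 1)) → ℝ)
    (hheven : EvenFn h) (hhhom : Homog0 h)
    (hhC1 : ContDiffOn ℝ 1 h {(0 : EuclideanSpace ℝ (Fin (m + 1)))}ᶜ)
    (hhran : ∀ ξ : EuclideanSpace ℝ (Fin (m + 1)), ξ ≠ 0 → h ξ ∈ Set.Ioo (0 : ℝ) 1)
    (ρ : SchwartzMap (EuclideanSpace ℝ (Fin m)) ℝ)
    (hρnorm : ∫ γ : EuclideanSpace ℝ (Fin m), ‖ftRho ρ γ‖ ^ 2 = 1) :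
    ∀ δ ∈ Set.Ioo (0 : ℝ) 1,
      Tendsto (fun p : ℝ =>
          (radonDensity h ρ p - |p| ^ (-2 * h (theta0 m) - (m + 1 : ℝ))) *
            |p| ^ (2 * h (theta0 m) + (m + 1 : ℝ) + δ))
        (cocompact ℝ) (nhds 0) :=
  statement17_general m h hheven hhhom hhC1 hhran ρ hρnorm
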